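/- Let X be a measurable space, ν a σ-finite measure on X, C ≥ 0, and κ a Markov kernel from X to X such that for every x ∈ X the measure κ(x) is absolutely continuous with respect to ν with density bounded above by C ν-a.e. Then for every integer k ≥ 1 and every x ∈ X, the k-fold composition κ^k(x) is absolutely continuous with respect to ν with density bounded above by C ν-a.e. -/

import Mathlib

open MeasureTheory ProbabilityTheory
open scoped ENNReal

/-- The `k`-fold composition `κ^k` of a kernel `κ` from `X` to `X`
(`κ^0` is the identity kernel). -/
noncomputable def kernelPow {X : Type*} [MeasurableSpace X]
    (κ : Kernel X X) : ℕ → Kernel X X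
  | 0 => Kernel.id
  | (n + 1) => κ.comp (kernelPow κ n)

lemma kernelPow_isMarkov {X : Type*} [MeasurableSpace X]
    (κ : Kernel X X) [IsMarkovKernel κ] (n : ℕ) :
    IsMarkovKernel (kernelPow κ n) := by
  induction n with
  | zero => show IsMarkovKernel Kernel.id; infer_instance
  | succ n ih => show IsMarkovKernel (κ.comp (kernelPow κ n)); haveI := ih; infer_instance

lemma aux_of_le {X : Type*} [MeasurableSpace X] (ν : Measure X) [SigmaFinite ν]
    (μ : Measure X) (c : ℝ≥0∞) (hc : c ≠ ⊤)
    (hle : ∀ s : Set X, MeasurableSet s → μ s ≤ c * ν s) :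
    μ ≪ ν ∧ ∀ᵐ y ∂ν, μ.rnDeriv ν y ≤ c := by
  have hac : μ ≪ ν := by
    refine Measure.AbsolutelyContinuous.mk fun s hsm hs ↦ ?_
    have := hle s hsm
    rw [hs, mul_zero] at this
    exact le_antisymm this zero_le
  refine ⟨hac, ?_⟩
  refine ae_le_of_forall_setLIntegral_le_of_sigmaFinite (μ.measurable_rnDeriv ν)
    fun s hs _ ↦ ?_
  calc ∫⁻ y in s, μ.rnDeriv ν y ∂ν ≤ μ s := Measure.setLIntegral_rnDeriv_le s
    _ ≤ c * ν s := hle s hs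
    _ = ∫⁻ _ in s, c ∂ν := by rw [setLIntegral_const, mul_comm]

/-- (Multi-step transition density bound used in the proof of the
paper's Theorem 1.)  Let `ν` be a σ-finite measure on `X`, `C ≥ 0`, and `κ` a Markov
kernel from `X` to `X` such that for every `x` the measure `κ(x)` is absolutely
continuous w.r.t. `ν` with density bounded above by `C` ν-a.e.  Then for every
integer `k ≥ 1` and every `x`, the `k`-fold composition `κ^k(x)` is absolutely
continuous w.r.t. `ν` with density bounded above by `C` ν-a.e. -/
theorem kernel_power_density_bound
    {X : Type*} [MeasurableSpace X]
    (ν : Measure X) [SigmaFinite ν] (C : ℝ) (hC : 0 ≤ C)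
    (κ : Kernel X X) [IsMarkovKernel κ]
    (h : ∀ x, κ x ≪ ν ∧ ∀ᵐ y ∂ν, (κ x).rnDeriv ν y ≤ ENNReal.ofReal C)
    (k : ℕ) (hk : 1 ≤ k) (x : X) :
    kernelPow κ k x ≪ ν ∧
      ∀ᵐ y ∂ν, (kernelPow κ k x).rnDeriv ν y ≤ ENNReal.ofReal C := by
  -- one-step bound on measures
  have hstep : ∀ y, ∀ s : Set X, MeasurableSet s → κ y s ≤ ENNReal.ofReal C * ν s := by
    intro y s hs
    obtain ⟨hac, hbd⟩ := h y
    calc κ y s = ∫⁻ z in s, (κ y).rnDeriv ν z ∂ν := by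
          conv_lhs => rw [← Measure.withDensity_rnDeriv_eq _ _ hac]
          rw [withDensity_apply _ hs]
      _ ≤ ∫⁻ _ in s, ENNReal.ofReal C ∂ν :=
          setLIntegral_mono_ae aemeasurable_const (hbd.mono fun z hz _ ↦ hz)
      _ = ENNReal.ofReal C * ν s := by rw [setLIntegral_const, mul_comm]
  obtain ⟨n, rfl⟩ : ∃ n, k = n + 1 := ⟨k - 1, (Nat.succ_pred_eq_of_pos hk).symm⟩
  have hmk : IsMarkovKernel (kernelPow κ n) := kernelPow_isMarkov κ n
  have hprob : IsProbabilityMeasure (kernelPow κ n x) := hmk.isProbabilityMeasure x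
  refine aux_of_le ν _ _ ENNReal.ofReal_ne_top fun s hs ↦ ?_
  have hcomp : kernelPow κ (n + 1) x s = ∫⁻ y, κ y s ∂(kernelPow κ n x) := by
    show (κ.comp (kernelPow κ n)) x s = _
    rw [Kernel.comp_apply' _ _ _ hs]
  rw [hcomp]
  calc ∫⁻ y, κ y s ∂(kernelPow κ n x)
      ≤ ∫⁻ _, ENNReal.ofReal C * ν s ∂(kernelPow κ n x) :=
        lintegral_mono fun y ↦ hstep y s hs
    _ = ENNReal.ofReal C * ν s := by simp
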